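/- The derivative of ε̇ ↦ (P/2)Δ(ε̇) at ε̇ in direction φ equals (2η ε̇'(ε̇) + ζ tr(ε̇) I) : φ, where ζ = P/(2Δ(ε̇)) and η = e^{-2}ζ, for symmetric directions φ. -/

import Mathlib

noncomputable def frob (a b : Matrix (Fin 2) (Fin 2) ℝ) : ℝ := ∑ i, ∑ j, a i j * b i j

noncomputable def dev (a : Matrix (Fin 2) (Fin 2) ℝ) : Matrix (Fin 2) (Fin 2) ℝ :=
  a - (Matrix.trace a / 2) • (1 : Matrix (Fin 2) (Fin 2) ℝ)

noncomputable def delta (e Δmin : ℝ) (ε : Matrix (Fin 2) (Fin 2) ℝ) : ℝ :=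
  Real.sqrt (2 * (e ^ 2)⁻¹ * frob (dev ε) (dev ε) + (Matrix.trace ε) ^ 2 + Δmin ^ 2)

/-!
Along the line `s ↦ ε̇ + s φ`, `Δ²` is a quadratic polynomial in `s` whose derivative at `0` is
`4 e⁻² ε̇' : φ' + 2 tr ε̇ tr φ`; as `Δ ≥ Δ_min > 0`, the chain rule for the square root gives
`(2 e⁻² ε̇' : φ' + tr ε̇ tr φ) / Δ(ε̇)`. A deviator is traceless, hence Frobenius-orthogonal to `I`,
so `ε̇' : φ' = ε̇' : φ`, and multiplying by `P / 2` gives `(2η ε̇' + ζ tr ε̇ I) : φ`.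
-/

section Frobenius

variable (a b c : Matrix (Fin 2) (Fin 2) ℝ)

lemma frob_add_left : frob (a + b) c = frob a c + frob b c := by
  simp only [frob, Matrix.add_apply, add_mul, Finset.sum_add_distrib]

lemma frob_smul_left (s : ℝ) : frob (s • a) b = s * frob a b := by
  simp only [frob, Matrix.smul_apply, smul_eq_mul, mul_assoc, Finset.mul_sum]

lemma frob_sub_right : frob a (b - c) = frob a b - frob a c := by
  simp only [frob, Matrix.sub_apply, mul_sub, Finset.sum_sub_distrib]

lemma frob_smul_right (s : ℝ) : frob a (s • b) = s * frob a b := by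
  simp only [frob, Matrix.smul_apply, smul_eq_mul, mul_left_comm _ s, Finset.mul_sum]

lemma frob_one_left : frob 1 a = Matrix.trace a := by
  simp [frob, Fin.sum_univ_two, Matrix.one_apply, Matrix.trace_fin_two]

lemma frob_one_right : frob a 1 = Matrix.trace a := by
  simp [frob, Fin.sum_univ_two, Matrix.one_apply, Matrix.trace_fin_two]

lemma frob_self_nonneg : 0 ≤ frob a a :=
  Finset.sum_nonneg fun _ _ => Finset.sum_nonneg fun _ _ => mul_self_nonneg _

lemma hasDerivAt_frob_self_add_smul :
    HasDerivAt (fun s : ℝ => frob (a + s • b) (a + s • b)) (2 * frob a b) 0 := by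
  have hentry : ∀ i j, HasDerivAt (fun s : ℝ => (a + s • b) i j) (b i j) 0 := fun i j => by
    simpa using ((hasDerivAt_id (0 : ℝ)).mul_const (b i j)).const_add (a i j)
  refine (HasDerivAt.fun_sum fun i _ => HasDerivAt.fun_sum fun j _ =>
    (hentry i j).fun_mul (hentry i j)).congr_deriv ?_
  simp only [frob, Finset.mul_sum, zero_smul, add_zero]
  exact Finset.sum_congr rfl fun _ _ => Finset.sum_congr rfl fun _ _ => by ring

end Frobenius

lemma trace_dev (a : Matrix (Fin 2) (Fin 2) ℝ) : Matrix.trace (dev a) = 0 := by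
  simp [dev, Matrix.trace_fin_two]

lemma dev_add_smul (a b : Matrix (Fin 2) (Fin 2) ℝ) (s : ℝ) :
    dev (a + s • b) = dev a + s • dev b := by
  simp only [dev, Matrix.trace_add, Matrix.trace_smul, smul_eq_mul, smul_sub, smul_smul]
  module

lemma frob_dev_dev (a b : Matrix (Fin 2) (Fin 2) ℝ) :
    frob (dev a) (dev b) = frob (dev a) b := by
  nth_rw 2 [dev]
  rw [frob_sub_right, frob_smul_right, frob_one_right, trace_dev, mul_zero, sub_zero]

lemma delta_pos (e : ℝ) {Δmin : ℝ} (hΔ : 0 < Δmin) (ε : Matrix (Fin 2) (Fin 2) ℝ) :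
    0 < delta e Δmin ε := by
  have := frob_self_nonneg (dev ε)
  unfold delta
  positivity

lemma hasDerivAt_delta_add_smul (e : ℝ) {Δmin : ℝ} (hΔ : 0 < Δmin)
    (ε φ : Matrix (Fin 2) (Fin 2) ℝ) :
    HasDerivAt (fun s : ℝ => delta e Δmin (ε + s • φ))
      ((2 * (e ^ 2)⁻¹ * frob (dev ε) φ + Matrix.trace ε * Matrix.trace φ) / delta e Δmin ε) 0 := by
  have hfrob : HasDerivAt (fun s : ℝ => frob (dev (ε + s • φ)) (dev (ε + s • φ)))
      (2 * frob (dev ε) (dev φ)) 0 := by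
    simpa only [dev_add_smul] using hasDerivAt_frob_self_add_smul (dev ε) (dev φ)
  have htrace : HasDerivAt (fun s : ℝ => Matrix.trace (ε + s • φ)) (Matrix.trace φ) 0 := by
    simpa [Matrix.trace_add, Matrix.trace_smul] using
      ((hasDerivAt_id (0 : ℝ)).mul_const (Matrix.trace φ)).const_add (Matrix.trace ε)
  have hsq : HasDerivAt
      (fun s : ℝ => 2 * (e ^ 2)⁻¹ * frob (dev (ε + s • φ)) (dev (ε + s • φ))
        + Matrix.trace (ε + s • φ) ^ 2 + Δmin ^ 2)
      (2 * (e ^ 2)⁻¹ * (2 * frob (dev ε) (dev φ)) + 2 * Matrix.trace ε * Matrix.trace φ) 0 := by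
    refine (((hfrob.const_mul _).fun_add (htrace.fun_pow 2)).add_const (Δmin ^ 2)).congr_deriv ?_
    simp
  have hsq0 : 2 * (e ^ 2)⁻¹ * frob (dev (ε + (0 : ℝ) • φ)) (dev (ε + (0 : ℝ) • φ))
      + Matrix.trace (ε + (0 : ℝ) • φ) ^ 2 + Δmin ^ 2 ≠ 0 := by
    simpa only [zero_smul, add_zero] using (Real.sqrt_pos.1 (delta_pos e hΔ ε)).ne'
  refine (hsq.sqrt hsq0).congr_deriv ?_
  change _ / (2 * delta e Δmin (ε + (0 : ℝ) • φ)) = _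
  have hΔε := (delta_pos e hΔ ε).ne'
  rw [zero_smul, add_zero, frob_dev_dev]
  field_simp

theorem stress_derivative_general (e Δmin P : ℝ) (hΔ : 0 < Δmin)
    (ε φ : Matrix (Fin 2) (Fin 2) ℝ)
    (ζ η : ℝ) (hζ : ζ = P / (2 * delta e Δmin ε)) (hη : η = (e ^ 2)⁻¹ * ζ) :
    HasDerivAt (fun s : ℝ => (P / 2) * delta e Δmin (ε + s • φ))
      (frob ((2 * η) • dev ε + (ζ * Matrix.trace ε) • (1 : Matrix (Fin 2) (Fin 2) ℝ)) φ)
      0 := by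
  refine ((hasDerivAt_delta_add_smul e hΔ ε φ).const_mul (P / 2)).congr_deriv ?_
  rw [frob_add_left, frob_smul_left, frob_smul_left, frob_one_left, hη, hζ]
  ring

theorem stress_derivative (e Δmin P : ℝ) (he : 0 < e) (hΔ : 0 < Δmin)
    (ε φ : Matrix (Fin 2) (Fin 2) ℝ) (hε : ε.transpose = ε) (hφ : φ.transpose = φ)
    (ζ η : ℝ) (hζ : ζ = P / (2 * delta e Δmin ε)) (hη : η = (e ^ 2)⁻¹ * ζ) :
    HasDerivAt (fun s : ℝ => (P / 2) * delta e Δmin (ε + s • φ))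
      (frob ((2 * η) • dev ε + (ζ * Matrix.trace ε) • (1 : Matrix (Fin 2) (Fin 2) ℝ)) φ)
      0 :=
  stress_derivative_general e Δmin P hΔ ε φ ζ η hζ hη
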